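/- (Lemma 1, explicit-constant form: VC_r(Π) = O(d log H).) Let Π be a family of deterministic stopping policies with VC dimension at most d (as Boolean classifiers on List O), d ≥ 1, let g : List O → ℝ be a reward function, and let 𝓗 = { I(π, Δ) : π ∈ Π, Δ ∈ ℝ } be the associated indicator class on full trajectories, where I(π, Δ)(x) = true iff R_π(x) ≥ Δ. Then for every n ≥ 1, if 𝓗 shatters a set of n full trajectories of horizon H (H ≥ 1), then n ≤ 2·(d + 1)·log₂(2·e·(d + 1)·H). In other words, the real-valued VC dimension VC_r(Π) of Π, viewed as maps from full trajectories to returns, is at most 2·(d + 1)·log₂(2·e·(d + 1)·H). -/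

import Mathlib

/-!
Fix trajectories `x₁, …, xₙ` shattered by the threshold class. The returns of a policy on all of
them depend only on its values on the at most `n H` nonempty prefixes, and by Sauer–Shelah a
class of VC dimension at most `d` has at most `(n H + 1) ^ d` restrictions to that set. Once the
returns are fixed, a threshold labeling is determined by how many trajectories it labels `true`.
So at most `(n H + 1) ^ d (n + 1)` labelings are realized, whence `2 ^ n ≤ (2 n H) ^ (d + 1)`,
i.e. `n ≤ (d + 1) log₂ (2 n H)`, which solves to the stated bound.
-/

open scoped BigOperators

/-- The `t`-prefix of a full trajectory `x : Fin H → O`, i.e. the list `[x 0, …, x (t-1)]`. -/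
def trajPrefix {O : Type*} {H : ℕ} (x : Fin H → O) (t : ℕ) : List O :=
  (List.ofFn x).take t

open Classical in
/-- The stopping time of policy `π` on full trajectory `x`: the least `t` with
`1 ≤ t ≤ H` such that `π` halts on the `t`-prefix of `x`, and `H` if no such `t` exists. -/
noncomputable def stopTime {O : Type*} (H : ℕ) (π : List O → Bool) (x : Fin H → O) : ℕ :=
  if h : ∃ t, (1 ≤ t ∧ t ≤ H) ∧ π (trajPrefix x t) = true then Nat.find h else H

/-- The return of policy `π` on full trajectory `x` under reward function `g`. -/
noncomputable def policyReturn {O : Type*} {H : ℕ} (g : List O → ℝ) (π : List O → Bool)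
    (x : Fin H → O) : ℝ :=
  g (trajPrefix x (stopTime H π x))

/-- A family `Π` of policies shatters a finite set `S` of lists if every Boolean
labeling of `S` is realized by some member of `Π`. -/
def ShattersLists {O : Type*} (P : Set (List O → Bool)) (S : Finset (List O)) : Prop :=
  ∀ f : List O → Bool, ∃ π ∈ P, ∀ l ∈ S, π l = f l

open Finset

section Stopping

variable {O : Type*} {H : ℕ}

lemma stopTime_congr {π π' : List O → Bool} {x : Fin H → O}
    (h : ∀ t, 1 ≤ t → t ≤ H → π (trajPrefix x t) = π' (trajPrefix x t)) :
    stopTime H π x = stopTime H π' x := by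
  have hhalt : ∀ {t}, ((1 ≤ t ∧ t ≤ H) ∧ π (trajPrefix x t) = true) ↔
      ((1 ≤ t ∧ t ≤ H) ∧ π' (trajPrefix x t) = true) :=
    and_congr_right fun ht ↦ by rw [h _ ht.1 ht.2]
  unfold stopTime
  split_ifs with hπ hπ' hπ'
  · exact Nat.find_congr' hhalt
  · exact absurd (hπ.imp fun _ ↦ hhalt.1) hπ'
  · exact absurd (hπ'.imp fun _ ↦ hhalt.2) hπ
  · rfl

lemma policyReturn_congr (g : List O → ℝ) {π π' : List O → Bool} {x : Fin H → O}
    (h : ∀ t, 1 ≤ t → t ≤ H → π (trajPrefix x t) = π' (trajPrefix x t)) :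
    policyReturn g π x = policyReturn g π' x := by
  rw [policyReturn, policyReturn, stopTime_congr h]

end Stopping

section Traces

variable {α : Type*}

-- Traces live in `Finset S` rather than `Finset α` so that Mathlib's Sauer–Shelah lemma, stated
-- over a `Fintype`, applies with ground set `S`.
def trace (π : α → Bool) (S : Finset α) : Finset S := {a | π a = true}

open Classical in
noncomputable def traceFamily (P : Set (α → Bool)) (S : Finset α) : Finset (Finset S) :=
  {s | ∃ π ∈ P, trace π S = s}

lemma trace_mem_traceFamily {P : Set (α → Bool)} {π : α → Bool} (hπ : π ∈ P) (S : Finset α) :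
    trace π S ∈ traceFamily P S := by
  simp only [traceFamily, mem_filter, mem_univ, true_and]
  exact ⟨π, hπ, rfl⟩

lemma Nat.sum_Iic_choose_le_pow (m d : ℕ) : ∑ k ∈ Iic d, m.choose k ≤ (m + 1) ^ d := by
  induction d with
  | zero => simp [← Nat.range_succ_eq_Iic]
  | succ d ih =>
    rw [← Nat.range_succ_eq_Iic, sum_range_succ, Nat.range_succ_eq_Iic]
    have hchoose : m.choose (d + 1) ≤ m * (m + 1) ^ d :=
      (Nat.choose_le_pow m (d + 1)).trans <| by
        rw [pow_succ']; exact Nat.mul_le_mul_left m (Nat.pow_le_pow_left m.le_succ d)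
    calc _ ≤ (m + 1) ^ d + m * (m + 1) ^ d := Nat.add_le_add ih hchoose
      _ = (m + 1) ^ (d + 1) := by ring

variable {O : Type*} [DecidableEq O] {P : Set (List O → Bool)} {S : Finset (List O)}

lemma shattersLists_of_shatters_traceFamily {t : Finset S} (ht : (traceFamily P S).Shatters t) :
    ShattersLists P (t.map (Function.Embedding.subtype _)) := by
  intro f
  obtain ⟨u, hu, htu⟩ := ht (filter_subset (fun a : S ↦ f a = true) t)
  obtain ⟨π, hπ, rfl⟩ : ∃ π ∈ P, trace π S = u := by simpa [traceFamily] using hu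
  refine ⟨π, hπ, ?_⟩
  simp only [mem_map, Function.Embedding.coe_subtype]
  rintro _ ⟨a, ha, rfl⟩
  have := congrArg (a ∈ ·) htu
  simp only [mem_inter, mem_filter, trace, mem_univ, true_and, ha] at this
  rw [Bool.eq_iff_iff, this]

lemma vcDim_traceFamily_le {d : ℕ}
    (hVC : ∀ S : Finset (List O), S.card = d + 1 → ¬ ShattersLists P S) :
    (traceFamily P S).vcDim ≤ d := by
  refine Finset.sup_le fun t ht ↦ ?_
  by_contra! hcard
  obtain ⟨t', ht't, ht'card⟩ := exists_subset_card_eq (Nat.succ_le_of_lt hcard)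
  exact hVC _ (by rw [card_map, ht'card])
    (shattersLists_of_shatters_traceFamily ((mem_shatterer.1 ht).mono_right ht't))

lemma card_traceFamily_le {d : ℕ}
    (hVC : ∀ S : Finset (List O), S.card = d + 1 → ¬ ShattersLists P S) :
    #(traceFamily P S) ≤ (#S + 1) ^ d :=
  calc #(traceFamily P S)
      _ ≤ #(traceFamily P S).shatterer := card_le_card_shatterer _
      _ ≤ ∑ k ∈ Iic (traceFamily P S).vcDim, (Fintype.card S).choose k :=
        card_shatterer_le_sum_vcDim
      _ ≤ ∑ k ∈ Iic d, (#S).choose k := by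
        rw [Fintype.card_coe]
        exact sum_le_sum_of_subset (Iic_subset_Iic.2 (vcDim_traceFamily_le hVC))
      _ ≤ (#S + 1) ^ d := Nat.sum_Iic_choose_le_pow _ _

end Traces

lemma Finset.filter_le_eq_of_card_eq {ι α : Type*} [LinearOrder α] (s : Finset ι) (r : ι → α)
    {a b : α} (h : #{i ∈ s | a ≤ r i} = #{i ∈ s | b ≤ r i}) :
    {i ∈ s | a ≤ r i} = {i ∈ s | b ≤ r i} := by
  wlog hab : a ≤ b generalizing a b
  · exact (this h.symm (le_of_not_ge hab)).symm
  refine (eq_of_subset_of_card_le (fun i hi ↦ ?_) h.le).symm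
  simp only [mem_filter] at hi ⊢
  exact ⟨hi.1, hab.trans hi.2⟩

section Counting

variable {O : Type*} {H n : ℕ}

def prefixSet [DecidableEq O] (x : Fin n → Fin H → O) : Finset (List O) :=
  image (fun p : Fin n × Fin H ↦ trajPrefix (x p.1) (p.2 + 1)) univ

lemma card_prefixSet_le [DecidableEq O] (x : Fin n → Fin H → O) : #(prefixSet x) ≤ n * H :=
  card_image_le.trans (by simp)

lemma trajPrefix_mem_prefixSet [DecidableEq O] (x : Fin n → Fin H → O) (i : Fin n) {t : ℕ}
    (ht₁ : 1 ≤ t) (ht₂ : t ≤ H) : trajPrefix (x i) t ∈ prefixSet x := by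
  refine mem_image.2 ⟨(i, ⟨t - 1, by omega⟩), mem_univ _, ?_⟩
  simp only [Nat.sub_add_cancel ht₁]

lemma policyReturn_eq_of_trace_eq [DecidableEq O] (g : List O → ℝ) {π π' : List O → Bool}
    {x : Fin n → Fin H → O} (h : trace π (prefixSet x) = trace π' (prefixSet x)) (i : Fin n) :
    policyReturn g π (x i) = policyReturn g π' (x i) := by
  refine policyReturn_congr g fun t ht₁ ht₂ ↦ ?_
  have := congrArg (⟨_, trajPrefix_mem_prefixSet x i ht₁ ht₂⟩ ∈ ·) h
  simp only [trace, mem_filter, mem_univ, true_and] at this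
  rw [Bool.eq_iff_iff, this]

theorem two_pow_le_of_forall_threshold {d : ℕ} {P : Set (List O → Bool)}
    (hVC : ∀ S : Finset (List O), S.card = d + 1 → ¬ ShattersLists P S) (g : List O → ℝ)
    (x : Fin n → Fin H → O)
    (hsh : ∀ b : Fin n → Bool, ∃ π ∈ P, ∃ Δ : ℝ,
      ∀ i : Fin n, (b i = true ↔ Δ ≤ policyReturn g π (x i))) :
    2 ^ n ≤ (n * H + 1) ^ d * (n + 1) := by
  classical
  choose π hπP Δ hΔ using hsh
  set S := prefixSet x
  let Φ : (Fin n → Bool) → Finset S × ℕ := fun b ↦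
    (trace (π b) S, #{i | Δ b ≤ policyReturn g (π b) (x i)})
  have hΦ : Function.Injective Φ := by
    intro b b' hbb'
    obtain ⟨htrace, hcount⟩ := Prod.ext_iff.1 hbb'
    have hret i := policyReturn_eq_of_trace_eq g htrace.symm i
    simp only [Φ, hret] at hcount
    have habove := filter_le_eq_of_card_eq _ _ hcount
    funext i
    have := congrArg (i ∈ ·) habove
    simp only [mem_filter, mem_univ, true_and] at this
    rw [Bool.eq_iff_iff, hΔ, hΔ, hret, this]
  have hmaps (b) : Φ b ∈ traceFamily P S ×ˢ range (n + 1) := by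
    simp only [Φ, mem_product, mem_range]
    exact ⟨trace_mem_traceFamily (hπP b) S,
      Nat.lt_succ_of_le ((card_le_univ _).trans_eq (Fintype.card_fin n))⟩
  calc 2 ^ n = #(univ : Finset (Fin n → Bool)) := by simp
    _ ≤ #(traceFamily P S) * (n + 1) := by
      simpa using card_le_card_of_injOn (s := univ) Φ (fun b _ ↦ hmaps b) hΦ.injOn
    _ ≤ (#S + 1) ^ d * (n + 1) := by gcongr; exact card_traceFamily_le hVC
    _ ≤ (n * H + 1) ^ d * (n + 1) := by gcongr; exact card_prefixSet_le x

end Counting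

section Analysis

open Real

lemma log_le_div_exp_one {y : ℝ} (hy : 0 < y) : log y ≤ y / exp 1 := by
  have := log_le_sub_one_of_pos (div_pos hy (exp_pos 1))
  rw [log_div hy.ne' (exp_pos 1).ne', log_exp] at this
  linarith

lemma le_mul_logb_of_two_pow_le {n H d : ℕ} (hn : 1 ≤ n) (hH : 1 ≤ H)
    (h : 2 ^ n ≤ (n * H + 1) ^ d * (n + 1)) : (n : ℝ) ≤ (d + 1) * logb 2 (2 * n * H) := by
  have hnat : 2 ^ n ≤ (2 * n * H) ^ (d + 1) :=
    calc 2 ^ n ≤ (n * H + 1) ^ d * (n + 1) := h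
      _ ≤ (2 * n * H) ^ d * (2 * n * H) := by gcongr <;> nlinarith
      _ = (2 * n * H) ^ (d + 1) := (pow_succ _ _).symm
  have hreal : (2 : ℝ) ^ n ≤ (2 * n * H) ^ (d + 1) := by exact_mod_cast hnat
  have := logb_le_logb_of_le (b := 2) one_lt_two (by positivity) hreal
  rw [logb_pow, logb_pow, logb_self_eq_one one_lt_two] at this
  push_cast at this
  linarith

/-- Splitting `2 N c = (2 e a c) · (N / (e a))` and using `log y ≤ y / e` bounds the second
factor's contribution by `N / (e² log 2) ≤ N / 2`. -/
lemma le_two_mul_logb_of_le_mul_logb {a N c : ℝ} (ha : 0 < a) (hN : 0 < N) (hc : 0 < c)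
    (h : N ≤ a * logb 2 (2 * N * c)) : N ≤ 2 * a * logb 2 (2 * exp 1 * a * c) := by
  have he : 2 ≤ exp 1 := by linarith [add_one_le_exp (1 : ℝ)]
  have hlog2 : 1 / 2 ≤ log 2 := by linarith [log_two_gt_d9]
  set y := N / (exp 1 * a)
  have hy : 0 < y := by positivity
  have hNy : N = exp 1 * a * y := by simp only [y]; field_simp
  have hsplit : logb 2 (2 * N * c) = logb 2 (2 * exp 1 * a * c) + logb 2 y := by
    rw [← logb_mul (by positivity) hy.ne', hNy]
    ring_nf
  have hrest : a * logb 2 y ≤ N / 2 :=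
    calc a * logb 2 y = a * log y / log 2 := by rw [logb, mul_div_assoc]
      _ ≤ a * (y / exp 1) / log 2 := by gcongr; exact log_le_div_exp_one hy
      _ = N / (exp 1 * exp 1 * log 2) := by rw [hNy]; field_simp
      _ ≤ N / 2 := by gcongr; nlinarith
  rw [hsplit, mul_add] at h
  linarith

end Analysis

theorem vc_r_bound_general {O : Type*} {H d : ℕ} (hH : 1 ≤ H)
    (P : Set (List O → Bool))
    (hVC : ∀ S : Finset (List O), S.card = d + 1 → ¬ ShattersLists P S)
    (g : List O → ℝ) :
    ∀ n : ℕ, 1 ≤ n →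
      ∀ x : Fin n → (Fin H → O), Function.Injective x →
      (∀ b : Fin n → Bool, ∃ π ∈ P, ∃ Δ : ℝ,
          ∀ i : Fin n, (b i = true ↔ Δ ≤ policyReturn g π (x i))) →
      (n : ℝ) ≤ 2 * ((d : ℝ) + 1) * Real.logb 2 (2 * Real.exp 1 * ((d : ℝ) + 1) * H) := by
  intro n hn x _ hsh
  have hcount := two_pow_le_of_forall_threshold hVC g x hsh
  exact le_two_mul_logb_of_le_mul_logb (by positivity) (by exact_mod_cast hn)
    (by exact_mod_cast hH) (le_mul_logb_of_two_pow_le hn hH hcount)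

/-- Lemma 1 (explicit-constant form): the real-valued VC dimension of a VC-dimension-`d`
policy class, viewed through the indicator class `𝓗 = {I(π, Δ)}` on full trajectories of
horizon `H ≥ 1`, is at most `2·(d + 1)·log₂(2·e·(d + 1)·H)`. -/
theorem vc_r_bound {O : Type*} {H d : ℕ} (hH : 1 ≤ H) (hd : 1 ≤ d)
    (P : Set (List O → Bool))
    (hVC : ∀ S : Finset (List O), S.card = d + 1 → ¬ ShattersLists P S)
    (g : List O → ℝ) :
    ∀ n : ℕ, 1 ≤ n →
      ∀ x : Fin n → (Fin H → O), Function.Injective x →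
      (∀ b : Fin n → Bool, ∃ π ∈ P, ∃ Δ : ℝ,
          ∀ i : Fin n, (b i = true ↔ Δ ≤ policyReturn g π (x i))) →
      (n : ℝ) ≤ 2 * ((d : ℝ) + 1) * Real.logb 2 (2 * Real.exp 1 * ((d : ℝ) + 1) * H) :=
  vc_r_bound_general hH P hVC g
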